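/- Let U, V, W be nonempty compact subsets of ℂ and let p, q ∈ [1,∞] with 1/p + 1/q = 1. Then M_p = M_q, and if (U,V,W) is compatible then N_p = N_q. -/

import Mathlib

open scoped ENNReal

noncomputable section

/-- The sequence space `ℓᵖ(ℤ)` (complex valued). -/
abbrev SeqZ (p : ℝ≥0∞) : Type := lp (fun _ : ℤ => ℂ) p
/-- The sequence space `ℓᵖ(ℕ)` (complex valued). -/
abbrev SeqN (p : ℝ≥0∞) : Type := lp (fun _ : ℕ => ℂ) p

/-- The three diagonals take values in `U`, `V`, `W` respectively. -/
def RangesIn (U V W : Set ℂ) {ι : Type*} (u v w : ι → ℂ) : Prop :=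
  (∀ i, u i ∈ U) ∧ (∀ i, v i ∈ V) ∧ (∀ i, w i ∈ W)

/-- `A` acts on `ℓᵖ(ℤ)` as the bi-infinite tridiagonal matrix with subdiagonal `u`
(entries `a_{i,i-1} = u i`), main diagonal `v` and superdiagonal `w` (`a_{i,i+1} = w i`). -/
def BiActs {p : ℝ≥0∞} [Fact (1 ≤ p)] (A : SeqZ p →L[ℂ] SeqZ p) (u v w : ℤ → ℂ) : Prop :=
  ∀ (x : SeqZ p) (i : ℤ),
    (A x : ∀ _ : ℤ, ℂ) i =
      u i * (x : ∀ _ : ℤ, ℂ) (i - 1) + v i * (x : ∀ _ : ℤ, ℂ) i +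
        w i * (x : ∀ _ : ℤ, ℂ) (i + 1)

/-- `A` acts on `ℓᵖ(ℕ)` as the semi-infinite tridiagonal matrix with subdiagonal `u`
(entries `a_{i,i-1} = u i` for `i ≥ 1`), main diagonal `v` and superdiagonal `w`. -/
def SemiActs {p : ℝ≥0∞} [Fact (1 ≤ p)] (A : SeqN p →L[ℂ] SeqN p) (u v w : ℕ → ℂ) : Prop :=
  ∀ (x : SeqN p) (i : ℕ),
    (A x : ∀ _ : ℕ, ℂ) i =
      (if i = 0 then 0 else u i * (x : ∀ _ : ℕ, ℂ) (i - 1)) + v i * (x : ∀ _ : ℕ, ℂ) i +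
        w i * (x : ∀ _ : ℕ, ℂ) (i + 1)

/-- membership in `M(U,V,W)`: bi-infinite tridiagonal operators over `(U,V,W)`. -/
def MemM (U V W : Set ℂ) {p : ℝ≥0∞} [Fact (1 ≤ p)] (A : SeqZ p →L[ℂ] SeqZ p) : Prop :=
  ∃ u v w : ℤ → ℂ, RangesIn U V W u v w ∧ BiActs A u v w

/-- membership in `M₊(U,V,W)`: semi-infinite tridiagonal operators over `(U,V,W)`. -/
def MemMPlus (U V W : Set ℂ) {p : ℝ≥0∞} [Fact (1 ≤ p)] (A : SeqN p →L[ℂ] SeqN p) : Prop :=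
  ∃ u v w : ℕ → ℂ, RangesIn U V W u v w ∧ SemiActs A u v w

/-- pseudoergodicity of bi-infinite diagonal data: every finite pattern of diagonals over
`(U,V,W)` is reproduced to arbitrary accuracy somewhere along the diagonals. -/
def PseudoergodicZ (U V W : Set ℂ) (u v w : ℤ → ℂ) : Prop :=
  ∀ (n : ℕ) (bu bv bw : Fin n → ℂ), RangesIn U V W bu bv bw →
    ∀ ε : ℝ, 0 < ε → ∃ k : ℤ, ∀ i : Fin n,
      ‖u (k + (i : ℕ)) - bu i‖ < ε ∧ ‖v (k + (i : ℕ)) - bv i‖ < ε ∧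
        ‖w (k + (i : ℕ)) - bw i‖ < ε

/-- pseudoergodicity of semi-infinite diagonal data. -/
def PseudoergodicN (U V W : Set ℂ) (u v w : ℕ → ℂ) : Prop :=
  ∀ (n : ℕ) (bu bv bw : Fin n → ℂ), RangesIn U V W bu bv bw →
    ∀ ε : ℝ, 0 < ε → ∃ k : ℕ, ∀ i : Fin n,
      ‖u (k + (i : ℕ)) - bu i‖ < ε ∧ ‖v (k + (i : ℕ)) - bv i‖ < ε ∧
        ‖w (k + (i : ℕ)) - bw i‖ < ε

/-- membership in `PE(U,V,W)`: pseudoergodic bi-infinite operators. -/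
def MemPE (U V W : Set ℂ) {p : ℝ≥0∞} [Fact (1 ≤ p)] (A : SeqZ p →L[ℂ] SeqZ p) : Prop :=
  ∃ u v w : ℤ → ℂ, RangesIn U V W u v w ∧ PseudoergodicZ U V W u v w ∧ BiActs A u v w

/-- membership in `PE₊(U,V,W)`: pseudoergodic semi-infinite operators. -/
def MemPEPlus (U V W : Set ℂ) {p : ℝ≥0∞} [Fact (1 ≤ p)] (A : SeqN p →L[ℂ] SeqN p) : Prop :=
  ∃ u v w : ℕ → ℂ, RangesIn U V W u v w ∧ PseudoergodicN U V W u v w ∧ SemiActs A u v w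

/-- `(U,V,W)` is compatible: every operator in `M(U,V,W)` is invertible on `ℓᵖ(ℤ)`
for every `p ∈ [1,∞]`. -/
def Compatible (U V W : Set ℂ) : Prop :=
  ∀ (p : ℝ≥0∞) [Fact (1 ≤ p)], ∀ A : SeqZ p →L[ℂ] SeqZ p, MemM U V W A → IsUnit A

/-- `α(A)`: the dimension of the kernel. -/
def alphaDim {E : Type*} [NormedAddCommGroup E] [NormedSpace ℂ E] (A : E →L[ℂ] E) : ℕ :=
  Module.finrank ℂ (LinearMap.ker (A : E →ₗ[ℂ] E))

/-- `β(A)`: the codimension of the range. -/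
def betaDim {E : Type*} [NormedAddCommGroup E] [NormedSpace ℂ E] (A : E →L[ℂ] E) : ℕ :=
  Module.finrank ℂ (E ⧸ LinearMap.range (A : E →ₗ[ℂ] E))

/-- `A` is a Fredholm operator: finite-dimensional kernel and finite-codimensional range. -/
def IsFredholmOp {E : Type*} [NormedAddCommGroup E] [NormedSpace ℂ E] (A : E →L[ℂ] E) : Prop :=
  FiniteDimensional ℂ (LinearMap.ker (A : E →ₗ[ℂ] E)) ∧ FiniteDimensional ℂ (E ⧸ LinearMap.range (A : E →ₗ[ℂ] E))

/-- the Fredholm index `ind A = α(A) - β(A)`. -/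
def fredIndex {E : Type*} [NormedAddCommGroup E] [NormedSpace ℂ E] (A : E →L[ℂ] E) : ℤ :=
  (alphaDim A : ℤ) - (betaDim A : ℤ)

/-- `(U,V,W)` is compatible and the common Fredholm index `κ(U,V,W)` of the semi-infinite
operators in `M₊(U,V,W)` equals `k`. -/
def KappaIs (U V W : Set ℂ) (k : ℤ) : Prop :=
  Compatible U V W ∧
    ∀ (p : ℝ≥0∞) [Fact (1 ≤ p)], ∀ B : SeqN p →L[ℂ] SeqN p, MemMPlus U V W B →
      IsFredholmOp B ∧ fredIndex B = k

/-- union of the `ℓᵖ`-spectra of all operators in `M(U,V,W)`, at exponent `p`. -/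
def specSetZAt (U V W : Set ℂ) (p : ℝ≥0∞) [Fact (1 ≤ p)] : Set ℂ :=
  {lam | ∃ C : SeqZ p →L[ℂ] SeqZ p, MemM U V W C ∧ lam ∈ spectrum ℂ C}

/-- union of the `ℓᵖ`-spectra of all operators in `M₊(U,V,W)`, at exponent `p`. -/
def specSetNAt (U V W : Set ℂ) (p : ℝ≥0∞) [Fact (1 ≤ p)] : Set ℂ :=
  {lam | ∃ C : SeqN p →L[ℂ] SeqN p, MemMPlus U V W C ∧ lam ∈ spectrum ℂ C}

/-- `Σ(U,V,W)`: the union of the spectra of all operators in `M(U,V,W)`. -/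
def SigmaSet (U V W : Set ℂ) : Set ℂ :=
  ⋃ (p : ℝ≥0∞), ⋃ (h : Fact (1 ≤ p)), @specSetZAt U V W p h

/-- `Σ₊(U,V,W)`: the union of the spectra of all operators in `M₊(U,V,W)`. -/
def SigmaPlusSet (U V W : Set ℂ) : Set ℂ :=
  ⋃ (p : ℝ≥0∞), ⋃ (h : Fact (1 ≤ p)), @specSetNAt U V W p h

/-- `V - λ`. -/
def shiftSet (V : Set ℂ) (lam : ℂ) : Set ℂ := (fun v => v - lam) '' V

/-- `Σ_k(U,V,W) = {λ : (U, V-λ, W) compatible with κ(U, V-λ, W) = k}`. -/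
def SigmaK (U V W : Set ℂ) (k : ℤ) : Set ℂ := {lam | KappaIs U (shiftSet V lam) W k}

/-- `Σ_{±1} = Σ_{-1} ∪ Σ_1`. -/
def SigmaPM (U V W : Set ℂ) : Set ℂ := SigmaK U V W (-1) ∪ SigmaK U V W 1

/-- the ellipse `E(u,v,w) = {u t + v + w/t : |t| = 1}`. -/
def ellipse (u v w : ℂ) : Set ℂ := (fun t : ℂ => u * t + v + w / t) '' {t : ℂ | ‖t‖ = 1}

open Polynomial in
open Classical in
/-- winding number of the loop `t ↦ u t + v + w/t` (`t` on the unit circle, traversed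
counter-clockwise) around `lam`, computed, via the argument principle, as the number of
roots (with multiplicity) of `u t² + (v - λ) t + w` in the open unit disk minus the order
of the pole at `0`.  (Valid whenever `lam` does not lie on the ellipse itself.) -/
def windingAt (u v w lam : ℂ) : ℤ :=
  (((C u * X ^ 2 + C (v - lam) * X + C w).roots.filter (fun z => ‖z‖ < 1)).card : ℤ) - 1

/-- `lam` lies inside the oriented ellipse `E(u,v,w)`: not on it, nonzero winding number. -/
def insideEllipse (u v w lam : ℂ) : Prop :=
  lam ∉ ellipse u v w ∧ windingAt u v w lam ≠ 0

/-- `E_∩`: points inside all the ellipses `E(u,v,w)`, `(u,v,w) ∈ U × V × W`. -/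
def Ecap (U V W : Set ℂ) : Set ℂ :=
  {lam | ∀ u ∈ U, ∀ v ∈ V, ∀ w ∈ W, insideEllipse u v w lam}

/-- `E₁`: points of `E_∩` circumnavigated clockwise (winding number `-1`) by all ellipses. -/
def Eone (U V W : Set ℂ) : Set ℂ :=
  {lam ∈ Ecap U V W | ∀ u ∈ U, ∀ v ∈ V, ∀ w ∈ W, windingAt u v w lam = -1}

/-- `E_{-1}`: points of `E_∩` circumnavigated counter-clockwise (winding number `1`). -/
def EmOne (U V W : Set ℂ) : Set ℂ :=
  {lam ∈ Ecap U V W | ∀ u ∈ U, ∀ v ∈ V, ∀ w ∈ W, windingAt u v w lam = 1}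

/-- `E_{±1} = E_{-1} ∪ E₁`. -/
def Epm (U V W : Set ℂ) : Set ℂ := EmOne U V W ∪ Eone U V W

/-- `E_∪`: the union of the filled ellipses. -/
def Ecup (U V W : Set ℂ) : Set ℂ :=
  ⋃ (u ∈ U) (v ∈ V) (w ∈ W), convexHull ℝ (ellipse u v w)

/-- `sup` of moduli over a set, e.g. `u^* = max_{u ∈ U} |u|`. -/
def supAbs (S : Set ℂ) : ℝ := sSup ((fun z : ℂ => ‖z‖) '' S)

/-- `inf` of moduli over a set, e.g. `u_* = min_{u ∈ U} |u|`. -/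
def infAbs (S : Set ℂ) : ℝ := sInf ((fun z : ℂ => ‖z‖) '' S)

/-- `M_p = sup_{B ∈ M(U,V,W)} ‖B‖_p`. -/
def Mnorm (U V W : Set ℂ) (p : ℝ≥0∞) [Fact (1 ≤ p)] : ℝ :=
  sSup {x : ℝ | ∃ B : SeqZ p →L[ℂ] SeqZ p, MemM U V W B ∧ x = ‖B‖}

/-- `N_p = sup_{B ∈ M(U,V,W)} ‖B⁻¹‖_p`. -/
def Nnorm (U V W : Set ℂ) (p : ℝ≥0∞) [Fact (1 ≤ p)] : ℝ :=
  sSup {x : ℝ | ∃ B : SeqZ p →L[ℂ] SeqZ p, MemM U V W B ∧ x = ‖Ring.inverse B‖}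

/-- `M_{+,p} = sup_{B₊ ∈ M₊(U,V,W)} ‖B₊‖_p`. -/
def MnormPlus (U V W : Set ℂ) (p : ℝ≥0∞) [Fact (1 ≤ p)] : ℝ :=
  sSup {x : ℝ | ∃ B : SeqN p →L[ℂ] SeqN p, MemMPlus U V W B ∧ x = ‖B‖}

/-- `N_{+,p} = sup_{B₊ ∈ M₊(U,V,W)} ‖B₊⁻¹‖_p`. -/
def NnormPlus (U V W : Set ℂ) (p : ℝ≥0∞) [Fact (1 ≤ p)] : ℝ :=
  sSup {x : ℝ | ∃ B : SeqN p →L[ℂ] SeqN p, MemMPlus U V W B ∧ x = ‖Ring.inverse B‖}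

/-- `p` is favourable for `(U,V,W)`: `‖A₊⁻¹‖_p = N_{+,p} = N_p` for all `A₊ ∈ PE₊(U,V,W)`. -/
def Favourable (U V W : Set ℂ) (p : ℝ≥0∞) [Fact (1 ≤ p)] : Prop :=
  ∀ A : SeqN p →L[ℂ] SeqN p, MemPEPlus U V W A →
    ‖Ring.inverse A‖ = NnormPlus U V W p ∧ NnormPlus U V W p = Nnorm U V W p

/-- the `n × n` tridiagonal matrix with diagonals `u` (sub), `v` (main), `w` (super). -/
def JacobiMatrix {n : ℕ} (u v w : Fin n → ℂ) : Matrix (Fin n) (Fin n) ℂ :=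
  fun i j =>
    if ((i : ℕ) : ℤ) = ((j : ℕ) : ℤ) + 1 then u i
    else if i = j then v i
    else if ((j : ℕ) : ℤ) = ((i : ℕ) : ℤ) + 1 then w i
    else 0

/-- the `ℓᵖ` norm of a finite complex vector. -/
def pVecNorm (p : ℝ≥0∞) [Fact (1 ≤ p)] {n : ℕ} (x : Fin n → ℂ) : ℝ :=
  ‖(WithLp.equiv p (Fin n → ℂ)).symm x‖

/-- the operator norm of an `n × n` matrix acting on `(ℂⁿ, ‖·‖_p)`. -/
def matOpNorm (p : ℝ≥0∞) [Fact (1 ≤ p)] {n : ℕ} (F : Matrix (Fin n) (Fin n) ℂ) : ℝ :=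
  sInf {c : ℝ | 0 ≤ c ∧ ∀ x : Fin n → ℂ, pVecNorm p (F.mulVec x) ≤ c * pVecNorm p x}

/-- the `p`-operator norm of the inverse matrix. -/
def matInvNorm (p : ℝ≥0∞) [Fact (1 ≤ p)] {n : ℕ} (F : Matrix (Fin n) (Fin n) ℂ) : ℝ :=
  matOpNorm p F⁻¹

/-- `M_{n,p}`: sup of the `p`-norms of the `n × n` tridiagonal matrices over `(U,V,W)`. -/
def MnormFinN (U V W : Set ℂ) (p : ℝ≥0∞) [Fact (1 ≤ p)] (n : ℕ) : ℝ :=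
  sSup {x : ℝ | ∃ u v w : Fin n → ℂ, RangesIn U V W u v w ∧
    x = matOpNorm p (JacobiMatrix u v w)}

/-- `M_{fin,p}`: sup of the `p`-norms of all finite tridiagonal matrices over `(U,V,W)`. -/
def MnormFin (U V W : Set ℂ) (p : ℝ≥0∞) [Fact (1 ≤ p)] : ℝ :=
  sSup {x : ℝ | ∃ (n : ℕ) (u v w : Fin n → ℂ), RangesIn U V W u v w ∧
    x = matOpNorm p (JacobiMatrix u v w)}

/-- `N_{fin,p}`: sup of the `p`-norms of the inverses of all finite tridiagonal matrices. -/
def NnormFin (U V W : Set ℂ) (p : ℝ≥0∞) [Fact (1 ≤ p)] : ℝ :=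
  sSup {x : ℝ | ∃ (n : ℕ) (u v w : Fin n → ℂ), RangesIn U V W u v w ∧
    x = matInvNorm p (JacobiMatrix u v w)}

/-- entry `(i,j)` of the bi-infinite tridiagonal matrix with diagonals `u`, `v`, `w`. -/
def secEntryZ (u v w : ℤ → ℂ) (i j : ℤ) : ℂ :=
  if i = j + 1 then u i else if i = j then v i else if j = i + 1 then w i else 0

/-- the finite section `(a_{ij})_{i,j=l}^{r}` of the bi-infinite tridiagonal matrix. -/
def finSecZ (u v w : ℤ → ℂ) (l r : ℤ) :
    Matrix (Fin (r + 1 - l).toNat) (Fin (r + 1 - l).toNat) ℂ :=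
  fun i j => secEntryZ u v w (l + (i : ℕ)) (l + (j : ℕ))

/-- entry `(i,j)` of the semi-infinite tridiagonal matrix with diagonals `u`, `v`, `w`. -/
def secEntryN (u v w : ℕ → ℂ) (i j : ℕ) : ℂ :=
  if i = j + 1 then u i else if i = j then v i else if j = i + 1 then w i else 0

/-- the `n`-th finite section (first `n` rows and columns) of the semi-infinite
tridiagonal matrix with diagonals `u`, `v`, `w`. -/
def finSecN (u v w : ℕ → ℂ) (n : ℕ) : Matrix (Fin n) (Fin n) ℂ :=
  fun i j => secEntryN u v w i j

/-- stability of the sequence of finite sections of a bi-infinite tridiagonal matrix with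
cut-off sequences `l`, `r`: eventually invertible with uniformly bounded inverses. -/
def StableSecsZ (p : ℝ≥0∞) [Fact (1 ≤ p)] (u v w : ℤ → ℂ) (l r : ℕ → ℤ) : Prop :=
  ∃ (n₀ : ℕ) (c : ℝ), ∀ n, n₀ ≤ n →
    IsUnit (finSecZ u v w (l n) (r n)) ∧ matInvNorm p (finSecZ u v w (l n) (r n)) ≤ c

/-- stability of the sequence of finite sections of a semi-infinite tridiagonal matrix. -/
def StableSecsN (p : ℝ≥0∞) [Fact (1 ≤ p)] (u v w : ℕ → ℂ) (r : ℕ → ℕ) : Prop :=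
  ∃ (n₀ : ℕ) (c : ℝ), ∀ n, n₀ ≤ n →
    IsUnit (finSecN u v w (r n)) ∧ matInvNorm p (finSecN u v w (r n)) ≤ c

/-- the full finite section method applies to every operator in `M(U,V,W)`:
the operator is invertible and the finite sections `(a_{ij})_{i,j=-n}^{n}` are stable. -/
def FullFSMAppliesZ (U V W : Set ℂ) : Prop :=
  ∀ (p : ℝ≥0∞) [Fact (1 ≤ p)], ∀ u v w : ℤ → ℂ, RangesIn U V W u v w →
    ∀ A : SeqZ p →L[ℂ] SeqZ p, BiActs A u v w →
      IsUnit A ∧ StableSecsZ p u v w (fun n => -(n : ℤ)) (fun n => (n : ℤ))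

/-- the full finite section method applies to every operator in `M₊(U,V,W)`:
the operator is invertible and the finite sections `(a_{ij})_{i,j=1}^{n}` are stable. -/
def FullFSMAppliesN (U V W : Set ℂ) : Prop :=
  ∀ (p : ℝ≥0∞) [Fact (1 ≤ p)], ∀ u v w : ℕ → ℂ, RangesIn U V W u v w →
    ∀ A : SeqN p →L[ℂ] SeqN p, SemiActs A u v w →
      IsUnit A ∧ StableSecsN p u v w (fun n => n)

/-- one operator in `PE₊(U,V,W)` is invertible (on some, equivalently each, `ℓᵖ(ℕ)`). -/
def PEPlusInvAt (U V W : Set ℂ) (p : ℝ≥0∞) [Fact (1 ≤ p)] : Prop :=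
  ∃ B : SeqN p →L[ℂ] SeqN p, MemPEPlus U V W B ∧ IsUnit B

def ExistsInvPEPlus (U V W : Set ℂ) : Prop :=
  ∃ (p : ℝ≥0∞) (h : Fact (1 ≤ p)), @PEPlusInvAt U V W p h

/-- one operator in `PE₊(U,V,W)` is Fredholm of index `0`. -/
def PEPlusFred0At (U V W : Set ℂ) (p : ℝ≥0∞) [Fact (1 ≤ p)] : Prop :=
  ∃ B : SeqN p →L[ℂ] SeqN p, MemPEPlus U V W B ∧ IsFredholmOp B ∧ fredIndex B = 0

def ExistsFred0PEPlus (U V W : Set ℂ) : Prop :=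
  ∃ (p : ℝ≥0∞) (h : Fact (1 ≤ p)), @PEPlusFred0At U V W p h

/-- all operators in `M₊(U,V,W)` are invertible (on every `ℓᵖ(ℕ)`). -/
def AllMPlusInv (U V W : Set ℂ) : Prop :=
  ∀ (p : ℝ≥0∞) [Fact (1 ≤ p)], ∀ B : SeqN p →L[ℂ] SeqN p, MemMPlus U V W B → IsUnit B

/-- the `ε`-pseudospectrum of a bounded operator (the spectrum together with the points
where the resolvent has norm `> 1/ε`). -/
def pspec {E : Type*} [NormedAddCommGroup E] [NormedSpace ℂ E] (ε : ℝ)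
    (A : E →L[ℂ] E) : Set ℂ :=
  {lam | ¬IsUnit (A - lam • (1 : E →L[ℂ] E)) ∨
    1 / ε < ‖Ring.inverse (A - lam • (1 : E →L[ℂ] E))‖}

/-- the `ε`-pseudospectrum of an `n × n` matrix, in the `p`-operator norm. -/
def pspecMat (p : ℝ≥0∞) [Fact (1 ≤ p)] {n : ℕ} (ε : ℝ) (F : Matrix (Fin n) (Fin n) ℂ) :
    Set ℂ :=
  {lam | ¬IsUnit (F - lam • (1 : Matrix (Fin n) (Fin n) ℂ)) ∨
    1 / ε < matInvNorm p (F - lam • (1 : Matrix (Fin n) (Fin n) ℂ))}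

/-- `Σ_ε^p`: union of the `ε`-pseudospectra of all operators in `M(U,V,W)`. -/
def SigmaEps (U V W : Set ℂ) (p : ℝ≥0∞) [Fact (1 ≤ p)] (ε : ℝ) : Set ℂ :=
  {lam | ∃ B : SeqZ p →L[ℂ] SeqZ p, MemM U V W B ∧ lam ∈ pspec ε B}

/-- `Σ_{+,ε}^p`: union of the `ε`-pseudospectra of all operators in `M₊(U,V,W)`. -/
def SigmaPlusEps (U V W : Set ℂ) (p : ℝ≥0∞) [Fact (1 ≤ p)] (ε : ℝ) : Set ℂ :=
  {lam | ∃ B : SeqN p →L[ℂ] SeqN p, MemMPlus U V W B ∧ lam ∈ pspec ε B}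

/-- `p` is favourable for all the (compatible, index zero) shifted triples `(U, V-λ, W)`. -/
def FavAll (U V W : Set ℂ) (p : ℝ≥0∞) [Fact (1 ≤ p)] : Prop :=
  ∀ lam : ℂ, KappaIs U (shiftSet V lam) W 0 → Favourable U (shiftSet V lam) W p

end

/-! Let `A' ∈ M(U,V,W)` be the reflected transpose of `A ∈ M(U,V,W)`, with entries
`a'ᵢⱼ = a₋ⱼ,₋ᵢ`. It is the adjoint of `A` for the pairing `⟨x, y⟩ = ∑ᵢ xᵢ y₋ᵢ` of `ℓᵖ(ℤ)` with
`ℓ^q(ℤ)`, which is norming on both sides, so `‖A'‖_q = ‖A‖_p`; the inverses are adjoint as well,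
so `‖A'⁻¹‖_q = ‖A⁻¹‖_p`. Hence `A ↦ A'` matches the sets whose suprema are `M_p` and `M_q`
(resp. `N_p` and `N_q`). -/

section Reindex

variable {ι κ E 𝕜 : Type*} [NormedAddCommGroup E] {p : ℝ≥0∞}

theorem Memℓp.comp_equiv {f : ι → E} (hf : Memℓp f p) (e : κ ≃ ι) : Memℓp (f ∘ e) p := by
  rcases p.trichotomy with rfl | rfl | hp
  · rw [memℓp_zero_iff] at hf ⊢
    exact hf.preimage e.injective.injOn
  · rw [memℓp_infty_iff] at hf ⊢
    rwa [← e.surjective.range_comp (fun i => ‖f i‖)] at hf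
  · rw [memℓp_gen_iff hp] at hf ⊢
    exact (e.summable_iff (f := fun i => ‖f i‖ ^ p.toReal)).2 hf

theorem lp.norm_comp_equiv [Fact (1 ≤ p)] (x : lp (fun _ : ι => E) p) (e : κ ≃ ι) :
    ‖(⟨x ∘ e, (lp.memℓp x).comp_equiv e⟩ : lp (fun _ : κ => E) p)‖ = ‖x‖ := by
  rcases p.dichotomy with rfl | hp
  · simp only [lp.norm_eq_ciSup]
    exact e.iSup_comp (g := fun i => ‖x i‖)
  · have hp : 0 < p.toReal := zero_lt_one.trans_le hp
    simp only [lp.norm_eq_tsum_rpow hp]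
    congr 1
    exact e.tsum_eq (fun i => ‖x i‖ ^ p.toReal)

variable (𝕜) [NormedField 𝕜] [NormedSpace 𝕜 E]

def lp.compEquiv (p : ℝ≥0∞) [Fact (1 ≤ p)] (e : κ ≃ ι) :
    lp (fun _ : ι => E) p ≃ₗᵢ[𝕜] lp (fun _ : κ => E) p where
  toFun x := ⟨x ∘ e, (lp.memℓp x).comp_equiv e⟩
  invFun y := ⟨y ∘ e.symm, (lp.memℓp y).comp_equiv e.symm⟩
  map_add' _ _ := rfl
  map_smul' _ _ := rfl
  left_inv x := by ext; simp
  right_inv y := by ext; simp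
  norm_map' x := lp.norm_comp_equiv x e

end Reindex

theorem Memℓp.infty_of_forall_mem {ι E : Type*} [NormedAddCommGroup E] {S : Set E}
    (hS : Bornology.IsBounded S) {u : ι → E} (hu : ∀ i, u i ∈ S) : Memℓp u ∞ := by
  obtain ⟨C, hC⟩ := hS.exists_norm_le
  exact memℓp_infty ⟨C, Set.forall_mem_range.2 fun i => hC _ (hu i)⟩

theorem Complex.mul_conj_mul_norm_rpow {r : ℝ} (hr : 0 < r) (z : ℂ) :
    z * (starRingEnd ℂ z * (‖z‖ ^ (r - 2) : ℝ)) = (‖z‖ ^ r : ℝ) := by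
  rcases eq_or_ne z 0 with rfl | hz
  · simp [Real.zero_rpow hr.ne']
  · have hz' : 0 < ‖z‖ := norm_pos_iff.2 hz
    rw [← mul_assoc, Complex.mul_conj, Complex.normSq_eq_norm_sq, ← Complex.ofReal_mul,
      ← Real.rpow_natCast, ← Real.rpow_add hz']
    norm_num

theorem Complex.norm_conj_mul_norm_rpow_le {r : ℝ} (z : ℂ) :
    ‖starRingEnd ℂ z * (‖z‖ ^ (r - 2) : ℝ)‖ ≤ ‖z‖ ^ (r - 1) := by
  rcases eq_or_ne z 0 with rfl | hz
  · simp only [map_zero, zero_mul, norm_zero]; positivity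
  · have hz' : 0 < ‖z‖ := norm_pos_iff.2 hz
    rw [norm_mul, Complex.norm_conj, Complex.norm_real, Real.norm_of_nonneg (by positivity),
      show r - 1 = 1 + (r - 2) by ring, Real.rpow_add hz', Real.rpow_one]

section Pairing

variable {ι : Type*} (p q : ℝ≥0∞) [Fact (1 ≤ p)] [Fact (1 ≤ q)] [p.HolderConjugate q]

noncomputable def lp.mulPairing : lp (fun _ : ι => ℂ) p →L[ℂ] lp (fun _ : ι => ℂ) q →L[ℂ] ℂ :=
  lp.dualPairing p q (fun _ => ContinuousLinearMap.mul ℂ ℂ) (K := 1) fun _ => by simp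

variable {p q}

theorem lp.mulPairing_apply (x : lp (fun _ : ι => ℂ) p) (y : lp (fun _ : ι => ℂ) q) :
    lp.mulPairing p q x y = ∑' i, x i * y i := rfl

theorem lp.norm_mulPairing_le : ‖(lp.mulPairing p q : lp (fun _ : ι => ℂ) p →L[ℂ] _)‖ ≤ 1 :=
  (lp.norm_dualPairing (ι := ι) _ _).trans_eq NNReal.coe_one

theorem lp.exists_mulPairing_eq_norm_rpow (hq : q ≠ ∞) (y : lp (fun _ : ι => ℂ) q) :
    ∃ x : lp (fun _ : ι => ℂ) p,
      ‖x‖ ≤ ‖y‖ ^ (q.toReal - 1) ∧ lp.mulPairing p q x y = (‖y‖ ^ q.toReal : ℝ) := by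
  set r := q.toReal
  have hr : 0 < r := ENNReal.toReal_pos (ENNReal.HolderConjugate.ne_zero q p) hq
  let x₀ : ι → ℂ := fun i => starRingEnd ℂ (y i) * (‖y i‖ ^ (r - 2) : ℝ)
  have hx₀ (i : ι) : ‖x₀ i‖ ≤ ‖y i‖ ^ (r - 1) := Complex.norm_conj_mul_norm_rpow_le _
  obtain ⟨hmem, hnorm⟩ : ∃ hmem : Memℓp x₀ p,
      ‖(⟨x₀, hmem⟩ : lp (fun _ : ι => ℂ) p)‖ ≤ ‖y‖ ^ (r - 1) := by
    rcases eq_or_ne p ∞ with rfl | hp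
    · have hr1 : r = 1 := by
        simp [r, (ENNReal.HolderConjugate.eq_top_iff_eq_one ∞ q).1 rfl]
      have hx₀' (i : ι) : ‖x₀ i‖ ≤ 1 := by simpa [hr1] using hx₀ i
      refine ⟨memℓp_infty ⟨1, Set.forall_mem_range.2 hx₀'⟩, ?_⟩
      simpa [hr1] using lp.norm_le_of_forall_le zero_le_one (f := ⟨x₀, _⟩) hx₀'
    · have hrp := ENNReal.HolderConjugate.toReal_of_ne_top hq hp
      have hp' : 0 < p.toReal := hrp.symm.pos
      have hx₀p (i : ι) : ‖x₀ i‖ ^ p.toReal ≤ ‖y i‖ ^ r := by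
        calc ‖x₀ i‖ ^ p.toReal ≤ (‖y i‖ ^ (r - 1)) ^ p.toReal := by gcongr; exact hx₀ i
          _ = ‖y i‖ ^ r := by rw [← Real.rpow_mul (norm_nonneg _), hrp.sub_one_mul_conj]
      have hmem : Memℓp x₀ p := memℓp_gen <|
        ((lp.memℓp y).summable hr).of_nonneg_of_le (fun _ => by positivity) hx₀p
      refine ⟨hmem, lp.norm_le_of_forall_sum_le hp' (by positivity) fun s => ?_⟩
      calc ∑ i ∈ s, ‖x₀ i‖ ^ p.toReal ≤ ∑ i ∈ s, ‖y i‖ ^ r := Finset.sum_le_sum fun i _ => hx₀p i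
        _ ≤ ‖y‖ ^ r := lp.sum_rpow_le_norm_rpow hr y s
        _ = (‖y‖ ^ (r - 1)) ^ p.toReal := by
          rw [← Real.rpow_mul (norm_nonneg _), hrp.sub_one_mul_conj]
  refine ⟨⟨x₀, hmem⟩, hnorm, ?_⟩
  rw [lp.mulPairing_apply, lp.norm_rpow_eq_tsum hr, Complex.ofReal_tsum]
  refine tsum_congr fun i => ?_
  rw [mul_comm]
  exact Complex.mul_conj_mul_norm_rpow hr (y i)

theorem lp.norm_le_norm_mulPairing_flip (y : lp (fun _ : ι => ℂ) q) :
    ‖y‖ ≤ ‖(lp.mulPairing p q).flip y‖ := by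
  classical
  rcases eq_or_ne q ∞ with rfl | hq
  · refine lp.norm_le_of_forall_le (norm_nonneg _) fun i => ?_
    have hp : p = 1 := (ENNReal.HolderConjugate.eq_top_iff_eq_one ∞ p).1 rfl
    subst hp
    have h := ((lp.mulPairing 1 ∞).flip y).le_opNorm (lp.single 1 i 1)
    rwa [lp.norm_single zero_lt_one, norm_one, mul_one, ContinuousLinearMap.flip_apply,
      lp.mulPairing_apply, tsum_eq_single i fun j hj => by simp [lp.single_apply, hj],
      lp.single_apply_self, one_mul] at h
  · obtain ⟨x, hx, hxy⟩ := lp.exists_mulPairing_eq_norm_rpow (p := p) hq y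
    set r := q.toReal
    have hr : 1 ≤ r := by
      simpa using ENNReal.toReal_mono hq (ENNReal.HolderConjugate.one_le q p)
    rcases (norm_nonneg y).eq_or_lt with hy | hy
    · rw [← hy]; exact norm_nonneg _
    have h := ((lp.mulPairing p q).flip y).le_opNorm x
    rw [ContinuousLinearMap.flip_apply, hxy, Complex.norm_real,
      Real.norm_of_nonneg (by positivity)] at h
    have h' : ‖y‖ * ‖y‖ ^ (r - 1) ≤ ‖(lp.mulPairing p q).flip y‖ * ‖y‖ ^ (r - 1) := by
      calc ‖y‖ * ‖y‖ ^ (r - 1) = ‖y‖ ^ r := by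
            rw [← Real.rpow_one_add' hy.le (by linarith)]; ring_nf
        _ ≤ _ := h.trans (by gcongr)
    exact le_of_mul_le_mul_right h' (by positivity)

end Pairing

section Adjoint

variable {𝕜 E F : Type*} [NontriviallyNormedField 𝕜] [NormedAddCommGroup E] [NormedSpace 𝕜 E]
  [NormedAddCommGroup F] [NormedSpace 𝕜 F] {B : E →L[𝕜] F →L[𝕜] 𝕜} {T : E →L[𝕜] E}
  {T' : F →L[𝕜] F}

theorem ContinuousLinearMap.opNorm_le_of_adjoint (hB : ‖B‖ ≤ 1)
    (hF : ∀ y, ‖y‖ ≤ ‖B.flip y‖) (h : ∀ x y, B (T x) y = B x (T' y)) : ‖T'‖ ≤ ‖T‖ := by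
  refine T'.opNorm_le_bound (norm_nonneg T) fun y => ?_
  have hcomp : B.flip (T' y) = (B.flip y).comp T := by ext x; simp [h]
  calc ‖T' y‖ ≤ ‖(B.flip y).comp T‖ := hcomp ▸ hF (T' y)
    _ ≤ ‖B.flip y‖ * ‖T‖ := (B.flip y).opNorm_comp_le T
    _ ≤ ‖B.flip‖ * ‖y‖ * ‖T‖ := by gcongr; exact B.flip.le_opNorm y
    _ ≤ ‖T‖ * ‖y‖ := by
      rw [ContinuousLinearMap.opNorm_flip, mul_comm ‖T‖]
      exact mul_le_mul_of_nonneg_right (mul_le_of_le_one_left (norm_nonneg y) hB) (norm_nonneg T)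

theorem ContinuousLinearMap.opNorm_eq_of_adjoint (hB : ‖B‖ ≤ 1) (hE : ∀ x, ‖x‖ ≤ ‖B x‖)
    (hF : ∀ y, ‖y‖ ≤ ‖B.flip y‖) (h : ∀ x y, B (T x) y = B x (T' y)) : ‖T'‖ = ‖T‖ :=
  (opNorm_le_of_adjoint hB hF h).antisymm <|
    opNorm_le_of_adjoint (B := B.flip) (by rwa [opNorm_flip]) (by simpa using hE)
      fun y x => (h x y).symm

theorem ContinuousLinearMap.inverse_adjoint (hT : IsUnit T) (hT' : IsUnit T')
    (h : ∀ x y, B (T x) y = B x (T' y)) (x : E) (y : F) :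
    B (Ring.inverse T x) y = B x (Ring.inverse T' y) := by
  have hTx : T (Ring.inverse T x) = x := congr($(Ring.mul_inverse_cancel T hT) x)
  have hT'y : T' (Ring.inverse T' y) = y := congr($(Ring.mul_inverse_cancel T' hT') y)
  calc B (Ring.inverse T x) y = B (Ring.inverse T x) (T' (Ring.inverse T' y)) := by rw [hT'y]
    _ = B x (Ring.inverse T' y) := by rw [← h, hTx]

end Adjoint

section Tridiagonal

variable {p q : ℝ≥0∞} [Fact (1 ≤ p)] [Fact (1 ≤ q)]

section ReflPairing

variable (p q) [p.HolderConjugate q]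

noncomputable def reflPairing : SeqZ p →L[ℂ] SeqZ q →L[ℂ] ℂ :=
  ((lp.mulPairing p q).flip.comp
    (lp.compEquiv ℂ q (Equiv.neg ℤ)).toLinearIsometry.toContinuousLinearMap).flip

variable {p q}

theorem reflPairing_apply (x : SeqZ p) (y : SeqZ q) : reflPairing p q x y = ∑' i, x i * y (-i) :=
  rfl

theorem norm_reflPairing_le : ‖reflPairing p q‖ ≤ 1 := by
  refine ContinuousLinearMap.opNorm_le_bound₂ _ zero_le_one fun x y => ?_
  have h := (lp.mulPairing p q).le_opNorm₂ x (lp.compEquiv ℂ q (Equiv.neg ℤ) y)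
  rw [LinearIsometryEquiv.norm_map] at h
  exact h.trans (by gcongr; exact lp.norm_mulPairing_le)

theorem reflPairing_flip : (reflPairing p q).flip = reflPairing q p := by
  ext y x
  simp only [ContinuousLinearMap.flip_apply, reflPairing_apply]
  rw [← (Equiv.neg ℤ).tsum_eq]
  simp [mul_comm]

theorem norm_le_norm_reflPairing_flip (y : SeqZ q) : ‖y‖ ≤ ‖(reflPairing p q).flip y‖ := by
  have h := lp.norm_le_norm_mulPairing_flip (p := p) (lp.compEquiv ℂ q (Equiv.neg ℤ) y)
  rwa [LinearIsometryEquiv.norm_map] at h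

theorem norm_le_norm_reflPairing (x : SeqZ p) : ‖x‖ ≤ ‖reflPairing p q x‖ := by
  simpa [reflPairing_flip] using norm_le_norm_reflPairing_flip (p := q) (q := p) x

end ReflPairing

variable (p) in
noncomputable def weightedShift (a : lp (fun _ : ℤ => ℂ) ∞) (k : ℤ) : SeqZ p →L[ℂ] SeqZ p :=
  lp.mapCLM p (fun i => ContinuousLinearMap.mul ℂ ℂ (a i)) (norm_nonneg a)
      (fun i => (ContinuousLinearMap.opNorm_mul_apply_le ℂ ℂ _).trans
        (lp.norm_apply_le_norm ENNReal.top_ne_zero a i)) ∘L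
    (lp.compEquiv ℂ p (Equiv.addRight k)).toLinearIsometry.toContinuousLinearMap

theorem weightedShift_apply (a : lp (fun _ : ℤ => ℂ) ∞) (k : ℤ) (x : SeqZ p) (i : ℤ) :
    weightedShift p a k x i = a i * x (i + k) :=
  rfl

theorem reflPairing_weightedShift [p.HolderConjugate q] {a b : lp (fun _ : ℤ => ℂ) ∞} {k : ℤ}
    (hb : ∀ i, b i = a (-i - k)) (x : SeqZ p) (y : SeqZ q) :
    reflPairing p q (weightedShift p a k x) y = reflPairing p q x (weightedShift q b k y) := by
  simp only [reflPairing_apply, weightedShift_apply, hb]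
  conv_rhs => rw [← (Equiv.addRight k).tsum_eq]
  refine tsum_congr fun i => ?_
  simp only [Equiv.coe_addRight]
  ring_nf

variable (p) in
noncomputable def tridiag (u v w : lp (fun _ : ℤ => ℂ) ∞) : SeqZ p →L[ℂ] SeqZ p :=
  weightedShift p u (-1) + weightedShift p v 0 + weightedShift p w 1

theorem biActs_tridiag (u v w : lp (fun _ : ℤ => ℂ) ∞) : BiActs (tridiag p u v w) u v w := by
  intro x i
  simp [tridiag, weightedShift_apply, sub_eq_add_neg]

theorem BiActs.eq_tridiag {T : SeqZ p →L[ℂ] SeqZ p} {u v w : lp (fun _ : ℤ => ℂ) ∞}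
    (hT : BiActs T u v w) : T = tridiag p u v w := by
  ext x i
  rw [hT x i, biActs_tridiag u v w x i]

theorem reflPairing_tridiag [p.HolderConjugate q] {u v w u' v' w' : lp (fun _ : ℤ => ℂ) ∞}
    (hu : ∀ i, u' i = u (1 - i)) (hv : ∀ i, v' i = v (-i)) (hw : ∀ i, w' i = w (-1 - i))
    (x : SeqZ p) (y : SeqZ q) :
    reflPairing p q (tridiag p u v w x) y = reflPairing p q x (tridiag q u' v' w' y) := by
  simp only [tridiag, add_apply, map_add]
  rw [reflPairing_weightedShift (b := u') fun i => (hu i).trans (congrArg u (by ring)),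
    reflPairing_weightedShift (b := v') fun i => (hv i).trans (congrArg v (by ring)),
    reflPairing_weightedShift (b := w') fun i => (hw i).trans (congrArg w (by ring))]

end Tridiagonal

section Duality

variable {p q : ℝ≥0∞} [Fact (1 ≤ p)] [Fact (1 ≤ q)] [p.HolderConjugate q] {U V W : Set ℂ}

theorem MemM.exists_reflPairing_adjoint (hU : Bornology.IsBounded U)
    (hV : Bornology.IsBounded V) (hW : Bornology.IsBounded W) {T : SeqZ p →L[ℂ] SeqZ p}
    (hT : MemM U V W T) :
    ∃ T' : SeqZ q →L[ℂ] SeqZ q, MemM U V W T' ∧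
      ∀ x y, reflPairing p q (T x) y = reflPairing p q x (T' y) := by
  obtain ⟨u, v, w, ⟨hu, hv, hw⟩, hT⟩ := hT
  let u' : lp (fun _ : ℤ => ℂ) ∞ := ⟨u, .infty_of_forall_mem hU hu⟩
  let v' : lp (fun _ : ℤ => ℂ) ∞ := ⟨v, .infty_of_forall_mem hV hv⟩
  let w' : lp (fun _ : ℤ => ℂ) ∞ := ⟨w, .infty_of_forall_mem hW hw⟩
  -- the matrix of `T` transposed and reflected through the origin
  refine ⟨tridiag q (lp.compEquiv ℂ ∞ (Equiv.subLeft 1) u') (lp.compEquiv ℂ ∞ (Equiv.neg ℤ) v')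
      (lp.compEquiv ℂ ∞ (Equiv.subLeft (-1)) w'),
    ⟨_, _, _, ⟨fun _ => hu _, fun _ => hv _, fun _ => hw _⟩, biActs_tridiag _ _ _⟩,
    fun x y => ?_⟩
  rw [BiActs.eq_tridiag (u := u') (v := v') (w := w') hT]
  exact reflPairing_tridiag (fun _ => rfl) (fun _ => rfl) (fun _ => rfl) x y

theorem norm_set_subset (hU : Bornology.IsBounded U) (hV : Bornology.IsBounded V)
    (hW : Bornology.IsBounded W) :
    {x : ℝ | ∃ B : SeqZ p →L[ℂ] SeqZ p, MemM U V W B ∧ x = ‖B‖} ⊆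
      {x : ℝ | ∃ B : SeqZ q →L[ℂ] SeqZ q, MemM U V W B ∧ x = ‖B‖} := by
  rintro _ ⟨B, hB, rfl⟩
  obtain ⟨B', hB', hadj⟩ := hB.exists_reflPairing_adjoint (q := q) hU hV hW
  exact ⟨B', hB', (ContinuousLinearMap.opNorm_eq_of_adjoint norm_reflPairing_le
    norm_le_norm_reflPairing norm_le_norm_reflPairing_flip hadj).symm⟩

theorem inverse_norm_set_subset (hU : Bornology.IsBounded U) (hV : Bornology.IsBounded V)
    (hW : Bornology.IsBounded W) (hc : Compatible U V W) :
    {x : ℝ | ∃ B : SeqZ p →L[ℂ] SeqZ p, MemM U V W B ∧ x = ‖Ring.inverse B‖} ⊆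
      {x : ℝ | ∃ B : SeqZ q →L[ℂ] SeqZ q, MemM U V W B ∧ x = ‖Ring.inverse B‖} := by
  rintro _ ⟨B, hB, rfl⟩
  obtain ⟨B', hB', hadj⟩ := hB.exists_reflPairing_adjoint (q := q) hU hV hW
  have hadj' := ContinuousLinearMap.inverse_adjoint (hc p B hB) (hc q B' hB') hadj
  exact ⟨B', hB', (ContinuousLinearMap.opNorm_eq_of_adjoint norm_reflPairing_le
    norm_le_norm_reflPairing norm_le_norm_reflPairing_flip hadj').symm⟩

end Duality

theorem statement9_general (U V W : Set ℂ)
    (hUc : IsCompact U) (hVc : IsCompact V)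
    (hWc : IsCompact W)
    (p q : ℝ≥0∞) [Fact (1 ≤ p)] [Fact (1 ≤ q)] (hpq : 1 / p + 1 / q = 1) :
    Mnorm U V W p = Mnorm U V W q ∧
    (Compatible U V W → Nnorm U V W p = Nnorm U V W q) := by
  have : p.HolderConjugate q := ENNReal.holderConjugate_iff.2 (by simpa only [one_div] using hpq)
  have hU := hUc.isBounded
  have hV := hVc.isBounded
  have hW := hWc.isBounded
  refine ⟨?_, fun hc => ?_⟩
  · rw [Mnorm, Mnorm, (norm_set_subset (p := p) (q := q) hU hV hW).antisymm
      (norm_set_subset hU hV hW)]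
  · rw [Nnorm, Nnorm, (inverse_norm_set_subset (p := p) (q := q) hU hV hW hc).antisymm
      (inverse_norm_set_subset hU hV hW hc)]

/-- For conjugate exponents `p, q`: `M_p = M_q`, and if `(U,V,W)` is
compatible then also `N_p = N_q`. -/
theorem statement9 (U V W : Set ℂ)
    (hUne : U.Nonempty) (hUc : IsCompact U) (hVne : V.Nonempty) (hVc : IsCompact V)
    (hWne : W.Nonempty) (hWc : IsCompact W)
    (p q : ℝ≥0∞) [Fact (1 ≤ p)] [Fact (1 ≤ q)] (hpq : 1 / p + 1 / q = 1) :
    Mnorm U V W p = Mnorm U V W q ∧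
    (Compatible U V W → Nnorm U V W p = Nnorm U V W q) :=
  statement9_general U V W hUc hVc hWc p q hpq
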